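/- In the structure (2^{<ω}, ⊑) of finite binary sequences under the prefix order, any two branches s, s' : ℕ → {0,1} with s(k) = s'(k) for all k < n realize the same complete type over the set 2^{<n} of sequences of length less than n, in the sense that for every first-order formula φ(v_0, v_1, …; c̄) with parameters c̄ from 2^{<n} and every m_0, m_1, … ∈ ℕ, φ holds of the tuple of initial segments (s↾m_0, s↾m_1, …) if and only if it holds of (s'↾m_0, s'↾m_1, …). -/
import Mathlib

open FirstOrder FirstOrder.Language

namespace BinaryTree

def seg (s : ℕ → Bool) (m : ℕ) : List Bool :=
  List.ofFn fun i : Fin m => s i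

inductive PRel : ℕ → Type
  | sqle : PRel 2

def prefixLang : Language := ⟨fun _ => Empty, PRel⟩

instance : prefixLang.Structure (List Bool) where
  funMap := fun f _ => Empty.elim f
  RelMap {_n} r x :=
    match r with
    | .sqle => (x 0) <+: (x 1)

/-- XOR a list with a branch `d`. -/
def xorF (d : ℕ → Bool) (l : List Bool) : List Bool :=
  List.ofFn fun i : Fin l.length => xor l[i] (d i)

@[simp] lemma xorF_length (d : ℕ → Bool) (l : List Bool) : (xorF d l).length = l.length := by
  simp [xorF]

lemma xorF_getElem (d : ℕ → Bool) (l : List Bool) (i : ℕ) (h : i < (xorF d l).length) :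
    (xorF d l)[i] = xor (l[i]'(by simpa using h)) (d i) := by
  simp [xorF]

lemma xorF_xorF (d : ℕ → Bool) (l : List Bool) : xorF d (xorF d l) = l := by
  apply List.ext_getElem (by simp)
  intro i h1 h2
  rw [xorF_getElem, xorF_getElem]
  · cases l[i] <;> cases d i <;> rfl

lemma xorF_prefix (d : ℕ → Bool) {l₁ l₂ : List Bool} (h : l₁ <+: l₂) :
    xorF d l₁ <+: xorF d l₂ := by
  rw [List.prefix_iff_eq_take] at h ⊢
  have hl : l₁.length ≤ l₂.length := by
    have := congrArg List.length h; simp at this; omega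
  apply List.ext_getElem
  · simp; omega
  · intro i h1 h2
    simp only [xorF_length] at h1
    rw [List.getElem_take, xorF_getElem, xorF_getElem]
    congr 1
    rw [List.getElem_of_eq h]
    simp [List.getElem_take]

lemma xorF_prefix_iff (d : ℕ → Bool) {l₁ l₂ : List Bool} :
    xorF d l₁ <+: xorF d l₂ ↔ l₁ <+: l₂ := by
  constructor
  · intro h
    have := xorF_prefix d h
    rwa [xorF_xorF, xorF_xorF] at this
  · exact xorF_prefix d

/-- The XOR translation as an automorphism of the prefix structure. -/
def xorEquiv (d : ℕ → Bool) : (List Bool) ≃[prefixLang] (List Bool) where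
  toFun := xorF d
  invFun := xorF d
  left_inv := xorF_xorF d
  right_inv := xorF_xorF d
  map_fun' := fun f _ => Empty.elim f
  map_rel' := fun r x => by
    cases r
    show (xorF d (x 0) <+: xorF d (x 1)) ↔ _
    exact xorF_prefix_iff d

/-- **Branches agreeing up to level `n` have the same type over `2^{<n}`.** -/
theorem branches_same_type_over_initial_levels (n : ℕ) (s s' : ℕ → Bool)
    (h : ∀ k < n, s k = s' k) (k j : ℕ)
    (φ : prefixLang.Formula (Fin k ⊕ Fin j)) (c : Fin j → List Bool)
    (hc : ∀ i, (c i).length < n) (m : Fin k → ℕ) :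
    φ.Realize (Sum.elim (fun i => seg s (m i)) c) ↔
      φ.Realize (Sum.elim (fun i => seg s' (m i)) c) := by
  set d : ℕ → Bool := fun i => xor (s i) (s' i) with hd
  have key : (xorEquiv d : List Bool → List Bool) ∘
      (Sum.elim (fun i => seg s (m i)) c) = Sum.elim (fun i => seg s' (m i)) c := by
    funext x
    cases x with
    | inl i =>
        show xorF d (seg s (m i)) = seg s' (m i)
        apply List.ext_getElem (by simp [seg])
        intro a h1 h2
        rw [xorF_getElem]
        simp only [seg, List.getElem_ofFn, hd]
        cases s a <;> cases s' a <;> rfl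
    | inr i =>
        show xorF d (c i) = c i
        apply List.ext_getElem (by simp)
        intro a h1 h2
        rw [xorF_getElem]
        have : d a = false := by
          simp [hd, h a (lt_of_lt_of_le (by simpa using h1) (le_of_lt (hc i)))]
        simp [this]
  rw [← key, StrongHomClass.realize_formula (xorEquiv d)]

end BinaryTree
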